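/- arXiv:2506.08415 — 2 statements merged into one kernel-verified Lean document; each statement's English description precedes it below -/
import Mathlib

section
/- Under Gaussian design and the well-specified model, for any fixed sketching matrix S with S H Sᵀ invertible, the expected risk of the last multi-pass SGD iterate decomposes exactly as E[R_M(v_L)] = σ² + E‖Sᵀv* − w*‖²_H + E‖θ_L − v*‖²_Σ + E‖v_L − θ_L‖²_Σ, where the expectations are over w*, the data (x_i, y_i), i = 1,…,N, and the sampling indices (i_t); in particular the cross terms vanish because E[S x xᵀ (Sᵀv* − w*)] = 0 and E[v_L | S, w*, data] = θ_L. -/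
open MeasureTheory ProbabilityTheory Matrix Finset
open scoped NNReal ENNReal

noncomputable section

namespace ScalingLaw

/-- The squared `A`-norm `uᵀ A u`. -/
def anormSq {n : ℕ} (A : Matrix (Fin n) (Fin n) ℝ) (u : Fin n → ℝ) : ℝ := u ⬝ᵥ (A *ᵥ u)

/-- The sketched covariance `Σ = S H Sᵀ`. -/
def sketchCov {M d : ℕ} (S : Matrix (Fin M) (Fin d) ℝ) (H : Matrix (Fin d) (Fin d) ℝ) :
    Matrix (Fin M) (Fin M) ℝ := S * H * Sᵀ

/-- Empirical sketched covariance `Σ̂ = S Xᵀ X Sᵀ / N`. -/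
def empCov {M d N : ℕ} (S : Matrix (Fin M) (Fin d) ℝ) (xs : Fin N → Fin d → ℝ) :
    Matrix (Fin M) (Fin M) ℝ :=
  (N : ℝ)⁻¹ • ∑ i : Fin N, vecMulVec (S *ᵥ xs i) (S *ᵥ xs i)

/-- `v* = (S H Sᵀ)⁻¹ S H w*`. -/
def vstar {M d : ℕ} (S : Matrix (Fin M) (Fin d) ℝ) (H : Matrix (Fin d) (Fin d) ℝ)
    (w : Fin d → ℝ) : Fin M → ℝ := (sketchCov S H)⁻¹ *ᵥ (S *ᵥ (H *ᵥ w))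

/-- Effective number of steps `L̃ = ⌊L / log₂ L⌋`. -/
def effSteps (L : ℕ) : ℕ := L / Nat.log 2 L

/-- Geometrically decaying stepsize schedule `γ_t = γ₀ / 2^{⌊t / (L/log L)⌋}`. -/
def stepSize (γ0 : ℝ) (L t : ℕ) : ℝ := γ0 / 2 ^ (t / (L / Nat.log 2 L))

/-- `γ₀ = min {γ, 1/(4 maxᵢ ‖S xᵢ‖²)}`. -/
def gamma0 {M d N : ℕ} [NeZero N] (γ : ℝ) (S : Matrix (Fin M) (Fin d) ℝ)
    (xs : Fin N → Fin d → ℝ) : ℝ :=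
  min γ (1 / (4 * Finset.univ.sup' Finset.univ_nonempty fun i => ∑ j, ((S *ᵥ xs i) j) ^ 2))

/-- `γ₀ = min {γ, 1/(4 tr(S Xᵀ X Sᵀ / N))}`. -/
def gamma0tr {M d N : ℕ} (γ : ℝ) (S : Matrix (Fin M) (Fin d) ℝ)
    (xs : Fin N → Fin d → ℝ) : ℝ :=
  min γ (1 / (4 * Matrix.trace (empCov S xs)))

/-- Gradient descent iterates. -/
def gd {M d N : ℕ} (S : Matrix (Fin M) (Fin d) ℝ) (xs : Fin N → Fin d → ℝ)
    (ys : Fin N → ℝ) (γs : ℕ → ℝ) : ℕ → Fin M → ℝ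
  | 0 => 0
  | t + 1 =>
      gd S xs ys γs t -
        (γs (t + 1) / (N : ℝ)) •
          ∑ i : Fin N, (((S *ᵥ xs i) ⬝ᵥ gd S xs ys γs t - ys i) • (S *ᵥ xs i))

/-- Multi-pass SGD iterates. -/
def sgd {M d N : ℕ} (S : Matrix (Fin M) (Fin d) ℝ) (xs : Fin N → Fin d → ℝ)
    (ys : Fin N → ℝ) (idx : ℕ → Fin N) (γs : ℕ → ℝ) : ℕ → Fin M → ℝ
  | 0 => 0
  | t + 1 =>
      sgd S xs ys idx γs t -
        (γs (t + 1) *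
            ((S *ᵥ xs (idx (t + 1))) ⬝ᵥ sgd S xs ys idx γs t - ys (idx (t + 1)))) •
          (S *ᵥ xs (idx (t + 1)))

/-- The contraction product `∏_{t=1}^{L} (I - γ_t A)`. -/
def contraction {M : ℕ} (A : Matrix (Fin M) (Fin M) ℝ) (γs : ℕ → ℝ) : ℕ → Matrix (Fin M) (Fin M) ℝ
  | 0 => 1
  | t + 1 => (1 - γs (t + 1) • A) * contraction A γs t

/-- `D(Σ̂) = (1/N) (I - ∏_{t=1}^L (I - γ_t Σ̂)) Σ̂⁻¹`. -/
def dMat {M : ℕ} (N : ℕ) (A : Matrix (Fin M) (Fin M) ℝ) (γs : ℕ → ℝ) (L : ℕ) :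
    Matrix (Fin M) (Fin M) ℝ :=
  (N : ℝ)⁻¹ • ((1 - contraction A γs L) * A⁻¹)

/-- The law of a Gaussian sketching matrix with i.i.d. `N(0, 1/M)` entries, as a measure on
`Fin M → Fin d → ℝ`. -/
def sketchMeasure (M d : ℕ) : Measure (Fin M → Fin d → ℝ) :=
  Measure.pi fun _ : Fin M => Measure.pi fun _ : Fin d => gaussianReal 0 ((M : ℝ≥0))⁻¹

/-- `X` is a centered Gaussian vector with covariance `H`: every linear functional of `X` is a
centered real Gaussian with the corresponding variance. -/
def IsGaussianVec {Ω : Type*} [MeasurableSpace Ω] {d : ℕ} (P : Measure Ω)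
    (X : Ω → Fin d → ℝ) (H : Matrix (Fin d) (Fin d) ℝ) : Prop :=
  Measurable X ∧
    ∀ u : Fin d → ℝ,
      P.map (fun ω => u ⬝ᵥ X ω) = gaussianReal 0 (Real.toNNReal (u ⬝ᵥ (H *ᵥ u)))

/-- `k`-th largest eigenvalue (1-indexed) of a real symmetric matrix; junk value `0` otherwise. -/
def eigval {n : ℕ} (A : Matrix (Fin n) (Fin n) ℝ) (k : ℕ) : ℝ :=
  if h : A.IsHermitian then
    (List.insertionSort (· ≥ ·) (List.ofFn h.eigenvalues)).getD (k - 1) 0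
  else 0

/-- Real power of a symmetric matrix through its spectral decomposition (junk value `0` on
non-symmetric matrices). -/
def matRpow {n : ℕ} (A : Matrix (Fin n) (Fin n) ℝ) (r : ℝ) : Matrix (Fin n) (Fin n) ℝ :=
  if h : A.IsHermitian then
    (h.eigenvectorUnitary : Matrix (Fin n) (Fin n) ℝ) *
      Matrix.diagonal (fun i => h.eigenvalues i ^ r) *
      (star (h.eigenvectorUnitary : Matrix (Fin n) (Fin n) ℝ))
  else 0

/-- `tr(A^r) = ∑ μ_i(A)^r` for a symmetric matrix `A`. -/
def traceRpow {n : ℕ} (A : Matrix (Fin n) (Fin n) ℝ) (r : ℝ) : ℝ :=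
  ∑ i : Fin n, eigval A ((i : ℕ) + 1) ^ r

/-- `ℓ²→ℓ²` operator norm of a square matrix. -/
def opNorm {n : ℕ} (A : Matrix (Fin n) (Fin n) ℝ) : ℝ :=
  ‖Matrix.toEuclideanCLM (𝕜 := ℝ) (n := Fin n) A‖

/-- Entrywise expectation of a random matrix. -/
def expMat {Ω : Type*} [MeasurableSpace Ω] (P : Measure Ω) {k l : ℕ}
    (A : Ω → Matrix (Fin k) (Fin l) ℝ) : Matrix (Fin k) (Fin l) ℝ :=
  Matrix.of fun i j => ∫ ω, A ω i j ∂P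

/-- Number of indices `i ∈ [n]` with `s · μ_i(A) > thr`. -/
def countAbove {n : ℕ} (A : Matrix (Fin n) (Fin n) ℝ) (s thr : ℝ) : ℕ :=
  (Finset.univ.filter fun i : Fin n => thr < s * eigval A ((i : ℕ) + 1)).card




/-- The statistical model: a prior `μw` on the true parameter, and for every value `w` of the
true parameter, the law `K w` of the data `(xᵢ, yᵢ)_{i<N}` and of the sampling indices. -/
structure Model (d N : ℕ) (Ω : Type*) [MeasurableSpace Ω] where
  /-- law of the data given the true parameter -/
  K : (Fin d → ℝ) → Measure Ω
  /-- prior on the true parameter `w*` -/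
  μw : Measure (Fin d → ℝ)
  /-- covariates -/
  x : Fin N → Ω → Fin d → ℝ
  /-- responses -/
  y : Fin N → Ω → ℝ
  /-- sampling indices for multi-pass SGD -/
  idx : ℕ → Ω → Fin N
  /-- eigenvalues of the (diagonal, wlog) covariance `H` -/
  lam : Fin d → ℝ
  /-- noise level -/
  σ2 : ℝ

namespace Model

variable {d N : ℕ} {Ω : Type*} [MeasurableSpace Ω]

/-- The covariance `H = diag(λ₁, λ₂, …)`. -/
def covH (m : Model d N Ω) : Matrix (Fin d) (Fin d) ℝ := Matrix.diagonal m.lam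

/-- Assumption 1A–1B and general well-posedness of the model: the covariates are i.i.d. centered
Gaussians with covariance `H`, the model is well-specified, the noise level is `σ2`, and the
sampling indices are i.i.d. uniform on `[N]`, independent of the data. -/
structure IsWellPosed [NeZero N] (m : Model d N Ω) : Prop where
  probK : ∀ w, IsProbabilityMeasure (m.K w)
  probPrior : IsProbabilityMeasure m.μw
  meas_y : ∀ i, Measurable (m.y i)
  meas_idx : ∀ t, Measurable (m.idx t)
  lam_nonneg : ∀ i, 0 ≤ m.lam i
  lam_anti : ∀ i j : Fin d, i ≤ j → m.lam j ≤ m.lam i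
  gauss : ∀ w i, IsGaussianVec (m.K w) (m.x i) m.covH
  iid_data : ∀ w, iIndepFun (fun i ω => (m.x i ω, m.y i ω)) (m.K w)
  ident_data : ∀ w i j, (m.K w).map (fun ω => (m.x i ω, m.y i ω)) =
      (m.K w).map (fun ω => (m.x j ω, m.y j ω))
  wellSpec : ∀ w i,
      (m.K w)[m.y i | MeasurableSpace.comap (m.x i) inferInstance] =ᵐ[m.K w]
        fun ω => m.x i ω ⬝ᵥ w
  noise : ∀ w i, ∫ ω, (m.y i ω - m.x i ω ⬝ᵥ w) ^ 2 ∂(m.K w) = m.σ2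
  idx_unif : ∀ w t, (m.K w).map (m.idx t) = (PMF.uniformOfFintype (Fin N)).toMeasure
  idx_iid : ∀ w, iIndepFun m.idx (m.K w)
  idx_data_indep : ∀ w,
      IndepFun (fun ω => fun i => (m.x i ω, m.y i ω)) (fun ω => fun t => m.idx t ω) (m.K w)

end Model

/-- Power-law spectrum: `λ_i ≍ i^{-a}` (indices 1-based). -/
def PowerLawSpectrum {d : ℕ} (lam : Fin d → ℝ) (a c₁ c₂ : ℝ) : Prop :=
  ∀ i : Fin d, c₁ * ((i : ℝ) + 1) ^ (-a) ≤ lam i ∧ lam i ≤ c₂ * ((i : ℝ) + 1) ^ (-a)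

/-- Source condition: the prior on `w*` has uncorrelated coordinates (in the eigenbasis of `H`)
and `E[λ_i ⟨v_i, w*⟩²] ≍ i^{-b}`. -/
def SourceCondition {d N : ℕ} {Ω : Type*} [MeasurableSpace Ω] (m : Model d N Ω)
    (b c₁ c₂ : ℝ) : Prop :=
  (∀ i j : Fin d, i ≠ j → ∫ w, w i * w j ∂m.μw = 0) ∧
    ∀ i : Fin d,
      c₁ * ((i : ℝ) + 1) ^ (-b) ≤ m.lam i * ∫ w, (w i) ^ 2 ∂m.μw ∧
        m.lam i * ∫ w, (w i) ^ 2 ∂m.μw ≤ c₂ * ((i : ℝ) + 1) ^ (-b)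


section Derived

variable {d N M : ℕ} {Ω : Type*} [MeasurableSpace Ω]

/-- The risk `R(w) = ‖w - w*‖²_H + σ²` of a parameter vector (closed form under
Assumption 1A–1B). -/
def Model.risk (m : Model d N Ω) (wstar : Fin d → ℝ) (w : Fin d → ℝ) : ℝ :=
  anormSq m.covH (w - wstar) + m.σ2

/-- The risk `R_M(v) = R(Sᵀ v)` of a sketched parameter vector. -/
def Model.riskM (m : Model d N Ω) (S : Fin M → Fin d → ℝ) (wstar : Fin d → ℝ)
    (v : Fin M → ℝ) : ℝ :=
  m.risk wstar ((Matrix.of S)ᵀ *ᵥ v)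

/-- The data matrix sketched: `X Sᵀ`, whose `i`-th row is `(S xᵢ)ᵀ`. -/
def sketchData {M d N : ℕ} (S : Matrix (Fin M) (Fin d) ℝ) (xs : Fin N → Fin d → ℝ) :
    Matrix (Fin N) (Fin M) ℝ :=
  Matrix.of fun i j => (S *ᵥ xs i) j

variable [NeZero N]

/-- The realized stepsize schedule, with `γ₀ = min{γ, 1/(4 maxᵢ ‖S xᵢ‖²)}`. -/
def Model.steps (m : Model d N Ω) (S : Fin M → Fin d → ℝ) (γ : ℝ) (L : ℕ) (ω : Ω) :
    ℕ → ℝ :=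
  stepSize (gamma0 γ (Matrix.of S) (fun i => m.x i ω)) L

/-- GD iterates as a function of the sample point. -/
def Model.gdIter (m : Model d N Ω) (S : Fin M → Fin d → ℝ) (γ : ℝ) (L : ℕ) (ω : Ω)
    (t : ℕ) : Fin M → ℝ :=
  gd (Matrix.of S) (fun i => m.x i ω) (fun i => m.y i ω) (m.steps S γ L ω) t

/-- Multi-pass SGD iterates as a function of the sample point. -/
def Model.sgdIter (m : Model d N Ω) (S : Fin M → Fin d → ℝ) (γ : ℝ) (L : ℕ) (ω : Ω)
    (t : ℕ) : Fin M → ℝ :=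
  sgd (Matrix.of S) (fun i => m.x i ω) (fun i => m.y i ω) (fun t => m.idx t ω)
    (m.steps S γ L ω) t

/-- The bias term `Bias = E_{w*} E_X ‖∏_{t=1}^L (I - γ_t Σ̂) v*‖²_Σ`. -/
def Model.biasTerm (m : Model d N Ω) (S : Fin M → Fin d → ℝ) (γ : ℝ) (L : ℕ) : ℝ :=
  ∫ w, (∫ ω,
      anormSq (sketchCov (Matrix.of S) m.covH)
        (contraction (empCov (Matrix.of S) (fun i => m.x i ω)) (m.steps S γ L ω) L *ᵥ
          vstar (Matrix.of S) m.covH w) ∂(m.K w)) ∂m.μw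

/-- The variance term `Variance = E[tr(X Sᵀ D(Σ̂) Σ D(Σ̂) S Xᵀ)]`. -/
def Model.varTerm (m : Model d N Ω) (S : Fin M → Fin d → ℝ) (γ : ℝ) (L : ℕ) : ℝ :=
  ∫ w, (∫ ω,
      Matrix.trace
        (sketchData (Matrix.of S) (fun i => m.x i ω) *
            dMat N (empCov (Matrix.of S) (fun i => m.x i ω)) (m.steps S γ L ω) L *
            sketchCov (Matrix.of S) m.covH *
            dMat N (empCov (Matrix.of S) (fun i => m.x i ω)) (m.steps S γ L ω) L *
            (sketchData (Matrix.of S) (fun i => m.x i ω))ᵀ) ∂(m.K w)) ∂m.μw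

/-- Expected excess risk of GD, `E[R_M(θ_L) - min R_M]`. -/
def Model.excessGD (m : Model d N Ω) (S : Fin M → Fin d → ℝ) (γ : ℝ) (L : ℕ) : ℝ :=
  ∫ w, (∫ ω,
      (m.riskM S w (m.gdIter S γ L ω L) - ⨅ v : Fin M → ℝ, m.riskM S w v) ∂(m.K w)) ∂m.μw

/-- Expected fluctuation error `E[R_M(v_L) - R_M(θ_L)] = E ‖v_L - θ_L‖²_Σ`. -/
def Model.fluctTerm (m : Model d N Ω) (S : Fin M → Fin d → ℝ) (γ : ℝ) (L : ℕ) : ℝ :=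
  ∫ w, (∫ ω,
      anormSq (sketchCov (Matrix.of S) m.covH)
        (m.sgdIter S γ L ω L - m.gdIter S γ L ω L) ∂(m.K w)) ∂m.μw

/-- Expected risk of the last multi-pass SGD iterate. -/
def Model.sgdRisk (m : Model d N Ω) (S : Fin M → Fin d → ℝ) (γ : ℝ) (L : ℕ) : ℝ :=
  ∫ w, (∫ ω, m.riskM S w (m.sgdIter S γ L ω L) ∂(m.K w)) ∂m.μw

end Derived



/-!
With `Σ v* = S H w*` (the normal equations), `Sᵀ v*` is the `H`-orthogonal projection of `w*` onto
the range of `Sᵀ`, so `R_M(v) = σ² + ‖Sᵀv* - w*‖²_H + ‖v - v*‖²_Σ` for every `v`; splitting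
`v_L - v* = (v_L - θ_L) + (θ_L - v*)` leaves a single cross term `2 ⟨v_L - θ_L, Σ (θ_L - v*)⟩`.
Each SGD step is affine in the iterate, so summing `v_L` over all `N^L` index sequences gives
`N^L θ_L`. The indices are uniform and independent of the data while `θ_L - v*` is a function of
the data, hence the cross term has expectation zero.
-/

section Quadratic

variable {m n : ℕ}

theorem anormSq_add {A : Matrix (Fin n) (Fin n) ℝ} (hA : A.IsSymm) (u v : Fin n → ℝ) :
    anormSq A (u + v) = anormSq A u + anormSq A v + 2 * (u ⬝ᵥ (A *ᵥ v)) := by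
  have hswap : v ⬝ᵥ (A *ᵥ u) = u ⬝ᵥ (A *ᵥ v) := by
    rw [← dotProduct_transpose_mulVec, hA.eq]
  simp only [anormSq, mulVec_add, dotProduct_add, add_dotProduct, hswap]
  ring

theorem sketchCov_isSymm (S : Matrix (Fin m) (Fin n) ℝ) {H : Matrix (Fin n) (Fin n) ℝ}
    (hH : H.IsSymm) : (sketchCov S H).IsSymm := by
  simp only [IsSymm, sketchCov, transpose_mul, transpose_transpose, hH.eq, Matrix.mul_assoc]

theorem transpose_mulVec_dotProduct (S : Matrix (Fin m) (Fin n) ℝ) (u : Fin m → ℝ)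
    (z : Fin n → ℝ) : (Sᵀ *ᵥ u) ⬝ᵥ z = u ⬝ᵥ (S *ᵥ z) := by
  rw [dotProduct_mulVec, mulVec_transpose]

theorem sketchCov_mulVec (S : Matrix (Fin m) (Fin n) ℝ) (H : Matrix (Fin n) (Fin n) ℝ)
    (u : Fin m → ℝ) : sketchCov S H *ᵥ u = S *ᵥ (H *ᵥ (Sᵀ *ᵥ u)) := by
  rw [sketchCov, mulVec_mulVec, mulVec_mulVec, Matrix.mul_assoc]

theorem anormSq_sketchCov (S : Matrix (Fin m) (Fin n) ℝ) (H : Matrix (Fin n) (Fin n) ℝ)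
    (u : Fin m → ℝ) : anormSq (sketchCov S H) u = anormSq H (Sᵀ *ᵥ u) := by
  rw [anormSq, anormSq, transpose_mulVec_dotProduct, sketchCov_mulVec]

theorem sketchCov_mulVec_vstar {S : Matrix (Fin m) (Fin n) ℝ} {H : Matrix (Fin n) (Fin n) ℝ}
    (hinv : IsUnit (sketchCov S H)) (w : Fin n → ℝ) :
    sketchCov S H *ᵥ vstar S H w = S *ᵥ (H *ᵥ w) := by
  rw [vstar, mulVec_mulVec, mul_nonsing_inv _ ((isUnit_iff_isUnit_det _).mp hinv), one_mulVec]

theorem anormSq_transpose_mulVec_sub {S : Matrix (Fin m) (Fin n) ℝ}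
    {H : Matrix (Fin n) (Fin n) ℝ} (hH : H.IsSymm) (hinv : IsUnit (sketchCov S H))
    (w : Fin n → ℝ) (v : Fin m → ℝ) :
    anormSq H (Sᵀ *ᵥ v - w) =
      anormSq (sketchCov S H) (v - vstar S H w) + anormSq H (Sᵀ *ᵥ vstar S H w - w) := by
  have hnormal : S *ᵥ (H *ᵥ (Sᵀ *ᵥ vstar S H w - w)) = 0 := by
    rw [mulVec_sub, mulVec_sub, ← sketchCov_mulVec, sketchCov_mulVec_vstar hinv, sub_self]
  have hsplit : Sᵀ *ᵥ v - w = Sᵀ *ᵥ (v - vstar S H w) + (Sᵀ *ᵥ vstar S H w - w) := by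
    rw [mulVec_sub]; abel
  rw [hsplit, anormSq_add hH, transpose_mulVec_dotProduct, hnormal, dotProduct_zero,
    mul_zero, add_zero, anormSq_sketchCov]

end Quadratic

section SGDAverage

variable {M d N : ℕ} (S : Matrix (Fin M) (Fin d) ℝ) (xs : Fin N → Fin d → ℝ) (ys : Fin N → ℝ)

def sgdStep (γ : ℝ) (j : Fin N) (v : Fin M → ℝ) : Fin M → ℝ :=
  v - (γ * ((S *ᵥ xs j) ⬝ᵥ v - ys j)) • (S *ᵥ xs j)

theorem sgd_succ (idx : ℕ → Fin N) (γs : ℕ → ℝ) (t : ℕ) :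
    sgd S xs ys idx γs (t + 1) =
      sgdStep S xs ys (γs (t + 1)) (idx (t + 1)) (sgd S xs ys idx γs t) :=
  rfl

theorem gd_succ [NeZero N] (γs : ℕ → ℝ) (t : ℕ) :
    gd S xs ys γs (t + 1) =
      (N : ℝ)⁻¹ • ∑ j, sgdStep S xs ys (γs (t + 1)) j (gd S xs ys γs t) := by
  have hN : (N : ℝ) ≠ 0 := Nat.cast_ne_zero.mpr (NeZero.ne N)
  rw [gd]
  simp only [sgdStep]
  rw [Finset.sum_sub_distrib, Finset.sum_const, Finset.card_univ, Fintype.card_fin,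
    ← Nat.cast_smul_eq_nsmul ℝ, smul_sub, smul_smul, inv_mul_cancel₀ hN, one_smul]
  simp only [mul_smul, ← Finset.smul_sum]
  rw [smul_smul, div_eq_inv_mul]

theorem sum_sgdStep {ι : Type*} (s : Finset ι) (γ : ℝ) (j : Fin N) (v : ι → Fin M → ℝ)
    (g : Fin M → ℝ) (hv : ∑ b ∈ s, v b = (#s : ℝ) • g) :
    ∑ b ∈ s, sgdStep S xs ys γ j (v b) = (#s : ℝ) • sgdStep S xs ys γ j g := by
  simp only [sgdStep, Finset.sum_sub_distrib, ← Finset.sum_smul, ← Finset.mul_sum,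
    ← dotProduct_sum, hv, Finset.sum_const, nsmul_eq_mul, dotProduct_smul, smul_eq_mul, smul_sub,
    smul_smul]
  congr 2
  ring

theorem sgd_congr {idx idx' : ℕ → Fin N} (γs : ℕ → ℝ) {t : ℕ}
    (h : ∀ s ≤ t, idx s = idx' s) : sgd S xs ys idx γs t = sgd S xs ys idx' γs t := by
  induction t with
  | zero => rfl
  | succ t ih =>
    rw [sgd_succ, sgd_succ, ih fun s hs => h s (hs.trans t.le_succ), h (t + 1) le_rfl]

/-- `sgd` never reads index `0`, so the entry `b 0` is a dummy. -/
def clampIdx (t : ℕ) (b : Fin (t + 1) → Fin N) : ℕ → Fin N := fun s => b (Fin.clamp s t)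

theorem clampIdx_snoc_of_le {t s : ℕ} (b : Fin (t + 1) → Fin N) (j : Fin N) (hs : s ≤ t) :
    clampIdx (t + 1) (Fin.snoc b j) s = clampIdx t b s := by
  have : Fin.clamp s (t + 1) = (Fin.clamp s t).castSucc := by
    ext; simp [Fin.clamp, Nat.min_eq_left hs, Nat.min_eq_left (hs.trans t.le_succ)]
  simp only [clampIdx, this, Fin.snoc_castSucc]

theorem clampIdx_snoc_self (t : ℕ) (b : Fin (t + 1) → Fin N) (j : Fin N) :
    clampIdx (t + 1) (Fin.snoc b j) (t + 1) = j := by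
  simp [clampIdx, Fin.clamp_eq_last]

theorem sum_sgd_clampIdx [NeZero N] (γs : ℕ → ℝ) (t : ℕ) :
    ∑ b : Fin (t + 1) → Fin N, sgd S xs ys (clampIdx t b) γs t =
      ((N : ℝ) ^ (t + 1)) • gd S xs ys γs t := by
  induction t with
  | zero => simp [sgd, gd]
  | succ t ih =>
    have hcard : (#(univ : Finset (Fin (t + 1) → Fin N)) : ℝ) = (N : ℝ) ^ (t + 1) := by simp
    calc ∑ b : Fin (t + 2) → Fin N, sgd S xs ys (clampIdx (t + 1) b) γs (t + 1)
        = ∑ j, ∑ b : Fin (t + 1) → Fin N,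
            sgdStep S xs ys (γs (t + 1)) j (sgd S xs ys (clampIdx t b) γs t) := by
          rw [← (Fin.snocEquiv fun _ => Fin N).sum_comp, Fintype.sum_prod_type]
          refine Finset.sum_congr rfl fun j _ => Finset.sum_congr rfl fun b _ => ?_
          change sgd S xs ys (clampIdx (t + 1) (Fin.snoc b j)) γs (t + 1) = _
          rw [sgd_succ, clampIdx_snoc_self,
            sgd_congr _ _ _ _ fun s hs => clampIdx_snoc_of_le b j hs]
      _ = ∑ j, ((N : ℝ) ^ (t + 1)) • sgdStep S xs ys (γs (t + 1)) j (gd S xs ys γs t) :=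
          Finset.sum_congr rfl fun j _ => by
            rw [← hcard]
            exact sum_sgdStep S xs ys _ _ j _ _ (by rw [ih, hcard])
      _ = ((N : ℝ) ^ (t + 2)) • gd S xs ys γs (t + 1) := by
          rw [gd_succ, ← Finset.smul_sum, smul_smul, pow_succ (N : ℝ) (t + 1), mul_assoc,
            mul_inv_cancel₀ (Nat.cast_ne_zero.mpr (NeZero.ne N)), mul_one]

end SGDAverage

section Measurability

variable {M d N : ℕ} {α : Type*} [MeasurableSpace α] (S : Matrix (Fin M) (Fin d) ℝ)
  {xs : α → Fin N → Fin d → ℝ} {ys : α → Fin N → ℝ} {γs : α → ℕ → ℝ}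

theorem measurable_sgd (hxs : Measurable xs) (hys : Measurable ys)
    (hγs : ∀ t, Measurable fun a => γs a t) (idx : ℕ → Fin N) (t : ℕ) :
    Measurable fun a => sgd S (xs a) (ys a) idx (γs a) t := by
  induction t with
  | zero => exact measurable_const
  | succ t ih =>
    simp only [sgd_succ, sgdStep]
    fun_prop

theorem measurable_gd (hxs : Measurable xs) (hys : Measurable ys)
    (hγs : ∀ t, Measurable fun a => γs a t) (t : ℕ) :
    Measurable fun a => gd S (xs a) (ys a) (γs a) t := by
  induction t with
  | zero => exact measurable_const
  | succ t ih =>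
    simp only [gd]
    fun_prop

theorem measurable_gamma0 [NeZero N] (γ : ℝ) (hxs : Measurable xs) :
    Measurable fun a => gamma0 γ S (xs a) := by
  unfold gamma0
  refine measurable_const.min (measurable_const.div (measurable_const.mul ?_))
  have hsup := Finset.measurable_sup' Finset.univ_nonempty
    (f := fun i a => ∑ j, ((S *ᵥ xs a i) j) ^ 2) fun i _ => by fun_prop
  convert hsup using 1
  ext a
  rw [Finset.sup'_apply]

end Measurability

section UniformAverage

variable {Ω : Type*} [MeasurableSpace Ω] (P : Measure Ω) [IsProbabilityMeasure P]

theorem map_pi_eq_uniformOfFintype {ι β : Type*} [Fintype ι] [DecidableEq ι] [Fintype β]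
    [Nonempty β] [MeasurableSpace β] [MeasurableSingletonClass β] {f : ι → Ω → β}
    (hf : ∀ i, Measurable (f i)) (hind : iIndepFun f P)
    (hunif : ∀ i, P.map (f i) = (PMF.uniformOfFintype β).toMeasure) :
    P.map (fun ω i => f i ω) = (PMF.uniformOfFintype (ι → β)).toMeasure := by
  rw [(iIndepFun_iff_map_fun_eq_pi_map fun i => (hf i).aemeasurable).mp hind]
  refine Measure.ext_of_singleton fun b => ?_
  rw [Measure.pi_singleton]
  simp only [hunif, PMF.toMeasure_apply_singleton _ _ (measurableSet_singleton _),
    PMF.uniformOfFintype_apply, Finset.prod_const, Finset.card_univ, Fintype.card_fun,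
    Nat.cast_pow, ENNReal.inv_pow]

theorem integral_eq_zero_of_indepFun_of_uniform {α β : Type*} [MeasurableSpace α] [Fintype β]
    [Nonempty β] [MeasurableSpace β] [MeasurableSingletonClass β] {D : Ω → α} {I : Ω → β}
    (hD : Measurable D) (hI : Measurable I) (hDI : IndepFun D I P)
    (hunif : P.map I = (PMF.uniformOfFintype β).toMeasure) {Φ : α → β → ℝ}
    (hΦ : ∀ b, Measurable fun a => Φ a b) (hsum : ∀ a, ∑ b, Φ a b = 0) :
    ∫ ω, Φ (D ω) (I ω) ∂P = 0 := by
  by_cases hint : Integrable (fun ω => Φ (D ω) (I ω)) P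
  swap
  · exact integral_undef hint
  have hΦm : Measurable fun q : α × β => Φ q.1 q.2 := measurable_from_prod_countable_left hΦ
  have hpair : Measurable fun ω => (D ω, I ω) := hD.prodMk hI
  have hprod : P.map (fun ω => (D ω, I ω)) = (P.map D).prod (P.map I) :=
    (indepFun_iff_map_prod_eq_prod_map_map hD.aemeasurable hI.aemeasurable).mp hDI
  have hint' : Integrable (fun q : α × β => Φ q.1 q.2) ((P.map D).prod (P.map I)) := by
    rw [← hprod]
    exact (integrable_map_measure hΦm.aestronglyMeasurable hpair.aemeasurable).mpr hint
  calc ∫ ω, Φ (D ω) (I ω) ∂P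
      = ∫ q : α × β, Φ q.1 q.2 ∂((P.map D).prod (P.map I)) := by
        rw [← hprod, integral_map hpair.aemeasurable hΦm.aestronglyMeasurable]
    _ = ∫ a, ∫ b, Φ a b ∂(P.map I) ∂(P.map D) := integral_prod _ hint'
    _ = 0 := by
        simp [hunif, PMF.integral_eq_sum, ← Finset.mul_sum, hsum]

end UniformAverage

section CrossTerm

variable {d N M : ℕ} [NeZero N] {Ω : Type*} [MeasurableSpace Ω] {m : Model d N Ω}

theorem Model.IsWellPosed.map_idx_eq_uniformOfFintype (hwp : m.IsWellPosed) (w : Fin d → ℝ)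
    (L : ℕ) :
    (m.K w).map (fun ω (t : Fin (L + 1)) => m.idx t ω) =
      (PMF.uniformOfFintype (Fin (L + 1) → Fin N)).toMeasure :=
  have := hwp.probK w
  map_pi_eq_uniformOfFintype _ (fun t => hwp.meas_idx t)
    ((hwp.idx_iid w).precomp Fin.val_injective) fun t => hwp.idx_unif w t

theorem Model.IsWellPosed.integral_sgdIter_sub_gdIter_dotProduct (hwp : m.IsWellPosed)
    (w : Fin d → ℝ) (S : Fin M → Fin d → ℝ) (γ : ℝ) (L : ℕ) (A : Matrix (Fin M) (Fin M) ℝ)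
    (u : Fin M → ℝ) :
    ∫ ω, (m.sgdIter S γ L ω L - m.gdIter S γ L ω L) ⬝ᵥ (A *ᵥ (m.gdIter S γ L ω L - u))
      ∂(m.K w) = 0 := by
  have := hwp.probK w
  let xsOf : (Fin N → (Fin d → ℝ) × ℝ) → Fin N → Fin d → ℝ := fun a i => (a i).1
  let ysOf : (Fin N → (Fin d → ℝ) × ℝ) → Fin N → ℝ := fun a i => (a i).2
  let γOf a : ℕ → ℝ := stepSize (gamma0 γ (Matrix.of S) (xsOf a)) L
  let gdOf a : Fin M → ℝ := gd (Matrix.of S) (xsOf a) (ysOf a) (γOf a) L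
  let Φ a (b : Fin (L + 1) → Fin N) : ℝ :=
    (sgd (Matrix.of S) (xsOf a) (ysOf a) (clampIdx L b) (γOf a) L - gdOf a) ⬝ᵥ
      (A *ᵥ (gdOf a - u))
  have hsgd ω : m.sgdIter S γ L ω L = sgd (Matrix.of S) (fun i => m.x i ω) (fun i => m.y i ω)
      (clampIdx L fun t => m.idx t ω) (m.steps S γ L ω) L :=
    sgd_congr _ _ _ _ fun s hs => by simp [clampIdx, Fin.clamp, Nat.min_eq_left hs]
  have hxs : Measurable xsOf := by fun_prop
  have hys : Measurable ysOf := by fun_prop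
  have hγ t : Measurable fun a => γOf a t := (measurable_gamma0 _ γ hxs).div_const _
  have hΦ b : Measurable fun a => Φ a b := by
    have := measurable_sgd (Matrix.of S) hxs hys hγ (clampIdx L b) L
    have := measurable_gd (Matrix.of S) hxs hys hγ L
    fun_prop
  have hsum a : ∑ b, Φ a b = 0 := by
    simp only [Φ, gdOf, ← sum_dotProduct, Finset.sum_sub_distrib, sum_sgd_clampIdx,
      Finset.sum_const, Finset.card_univ, Fintype.card_fun, Fintype.card_fin,
      ← Nat.cast_smul_eq_nsmul ℝ, Nat.cast_pow, sub_self, zero_dotProduct]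
  have hD : Measurable fun ω i => (m.x i ω, m.y i ω) :=
    measurable_pi_lambda _ fun i => (hwp.gauss w i).1.prodMk (hwp.meas_y i)
  have hI : Measurable fun ω (t : Fin (L + 1)) => m.idx t ω :=
    measurable_pi_lambda _ fun t => hwp.meas_idx t
  have hDI := (hwp.idx_data_indep w).comp measurable_id
    (measurable_pi_lambda (fun g (t : Fin (L + 1)) => g (t : ℕ)) fun t => measurable_pi_apply _)
  rw [← integral_eq_zero_of_indepFun_of_uniform _ hD hI hDI
    (hwp.map_idx_eq_uniformOfFintype w L) hΦ hsum]
  simp only [hsgd]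
  rfl

end CrossTerm

section RiskDecomposition

variable {d N M : ℕ} {Ω : Type*} [MeasurableSpace Ω] {m : Model d N Ω}
  {S : Fin M → Fin d → ℝ}

theorem Model.riskM_eq_add (hinv : IsUnit (sketchCov (Matrix.of S) m.covH)) (w : Fin d → ℝ)
    (v θ : Fin M → ℝ) :
    m.riskM S w v =
      m.σ2 + anormSq m.covH ((Matrix.of S)ᵀ *ᵥ vstar (Matrix.of S) m.covH w - w) +
        anormSq (sketchCov (Matrix.of S) m.covH) (θ - vstar (Matrix.of S) m.covH w) +
        anormSq (sketchCov (Matrix.of S) m.covH) (v - θ) +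
        2 * ((v - θ) ⬝ᵥ
          (sketchCov (Matrix.of S) m.covH *ᵥ (θ - vstar (Matrix.of S) m.covH w))) := by
  have hH : m.covH.IsSymm := isSymm_diagonal _
  rw [Model.riskM, Model.risk, anormSq_transpose_mulVec_sub hH hinv,
    ← sub_add_sub_cancel v θ, anormSq_add (sketchCov_isSymm _ hH)]
  ring

theorem Model.IsWellPosed.integral_riskM_sgdIter [NeZero N] (hwp : m.IsWellPosed)
    (hinv : IsUnit (sketchCov (Matrix.of S) m.covH)) (γ : ℝ) (L : ℕ) (w : Fin d → ℝ)
    (hExc : Integrable (fun ω => anormSq (sketchCov (Matrix.of S) m.covH)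
      (m.gdIter S γ L ω L - vstar (Matrix.of S) m.covH w)) (m.K w))
    (hFluct : Integrable (fun ω => anormSq (sketchCov (Matrix.of S) m.covH)
      (m.sgdIter S γ L ω L - m.gdIter S γ L ω L)) (m.K w))
    (hRisk : Integrable (fun ω => m.riskM S w (m.sgdIter S γ L ω L)) (m.K w)) :
    ∫ ω, m.riskM S w (m.sgdIter S γ L ω L) ∂(m.K w) =
      m.σ2 + anormSq m.covH ((Matrix.of S)ᵀ *ᵥ vstar (Matrix.of S) m.covH w - w) +
        (∫ ω, anormSq (sketchCov (Matrix.of S) m.covH)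
          (m.gdIter S γ L ω L - vstar (Matrix.of S) m.covH w) ∂(m.K w)) +
        ∫ ω, anormSq (sketchCov (Matrix.of S) m.covH)
          (m.sgdIter S γ L ω L - m.gdIter S γ L ω L) ∂(m.K w) := by
  have := hwp.probK w
  set c := m.σ2 + anormSq m.covH ((Matrix.of S)ᵀ *ᵥ vstar (Matrix.of S) m.covH w - w)
  set cross := fun ω => (m.sgdIter S γ L ω L - m.gdIter S γ L ω L) ⬝ᵥ
    (sketchCov (Matrix.of S) m.covH *ᵥ (m.gdIter S γ L ω L - vstar (Matrix.of S) m.covH w))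
  have hpt ω := m.riskM_eq_add hinv w (m.sgdIter S γ L ω L) (m.gdIter S γ L ω L)
  have hc : Integrable (fun _ => c) (m.K w) := integrable_const c
  have hcross : Integrable cross (m.K w) := by
    refine ((((hRisk.sub hc).sub hExc).sub hFluct).div_const 2).congr (ae_of_all _ fun ω => ?_)
    simp only [Pi.sub_apply, hpt, cross, c]
    ring
  rw [integral_congr_ae (ae_of_all _ hpt), integral_add, integral_add, integral_add,
    integral_const_mul, hwp.integral_sgdIter_sub_gdIter_dotProduct, integral_const,
    probReal_univ, one_smul, mul_zero, add_zero]
  exacts [hc, hExc, hc.add hExc, hFluct, (hc.add hExc).add hFluct, hcross.const_mul 2]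

end RiskDecomposition

theorem statement_7_general
    (d N M L : ℕ) [NeZero N] (Ω : Type*) [MeasurableSpace Ω] (m : Model d N Ω)
    (S : Fin M → Fin d → ℝ) (γ : ℝ)
    (hwp : m.IsWellPosed)
    -- `S H Sᵀ` is invertible
    (hinv : IsUnit (sketchCov (Matrix.of S) m.covH))
    -- integrability of the various error terms (implicit in the paper)
    (hIntExc : ∀ w, Integrable
      (fun ω => anormSq (sketchCov (Matrix.of S) m.covH)
        (m.gdIter S γ L ω L - vstar (Matrix.of S) m.covH w)) (m.K w))
    (hIntFluct : ∀ w, Integrable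
      (fun ω => anormSq (sketchCov (Matrix.of S) m.covH)
        (m.sgdIter S γ L ω L - m.gdIter S γ L ω L)) (m.K w))
    (hIntRisk : ∀ w, Integrable (fun ω => m.riskM S w (m.sgdIter S γ L ω L)) (m.K w))
    (hIntApprox : Integrable
      (fun w => anormSq m.covH ((Matrix.of S)ᵀ *ᵥ vstar (Matrix.of S) m.covH w - w)) m.μw)
    (hIntExc' : Integrable
      (fun w => ∫ ω, anormSq (sketchCov (Matrix.of S) m.covH)
        (m.gdIter S γ L ω L - vstar (Matrix.of S) m.covH w) ∂(m.K w)) m.μw)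
    (hIntFluct' : Integrable
      (fun w => ∫ ω, anormSq (sketchCov (Matrix.of S) m.covH)
        (m.sgdIter S γ L ω L - m.gdIter S γ L ω L) ∂(m.K w)) m.μw) :
    m.sgdRisk S γ L =
      m.σ2 +
        (∫ w, anormSq m.covH ((Matrix.of S)ᵀ *ᵥ vstar (Matrix.of S) m.covH w - w) ∂m.μw) +
        (∫ w, (∫ ω, anormSq (sketchCov (Matrix.of S) m.covH)
            (m.gdIter S γ L ω L - vstar (Matrix.of S) m.covH w) ∂(m.K w)) ∂m.μw) +
        m.fluctTerm S γ L := by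
  have := hwp.probPrior
  have hσ : Integrable (fun _ : Fin d → ℝ => m.σ2) m.μw := integrable_const _
  rw [Model.sgdRisk, Model.fluctTerm, integral_congr_ae (ae_of_all _ fun w =>
      hwp.integral_riskM_sgdIter hinv γ L w (hIntExc w) (hIntFluct w) (hIntRisk w)),
    integral_add, integral_add, integral_add, integral_const, probReal_univ, one_smul]
  exacts [hσ, hIntApprox, hσ.add hIntApprox, hIntExc', (hσ.add hIntApprox).add hIntExc',
    hIntFluct']

/-- Under Gaussian design and the well-specified model, for any fixed sketching
matrix `S` with `S H Sᵀ` invertible, the expected risk of the last multi-pass SGD iterate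
decomposes exactly as
`E[R_M(v_L)] = σ² + E‖Sᵀv* - w*‖²_H + E‖θ_L - v*‖²_Σ + E‖v_L - θ_L‖²_Σ`. -/
theorem statement_7
    (d N M L : ℕ) [NeZero N] (Ω : Type*) [MeasurableSpace Ω] (m : Model d N Ω)
    (S : Fin M → Fin d → ℝ) (γ : ℝ)
    (hwp : m.IsWellPosed)
    -- `S H Sᵀ` is invertible
    (hinv : IsUnit (sketchCov (Matrix.of S) m.covH))
    -- integrability of the various error terms (implicit in the paper)
    (hIntExc : ∀ w, Integrable
      (fun ω => anormSq (sketchCov (Matrix.of S) m.covH)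
        (m.gdIter S γ L ω L - vstar (Matrix.of S) m.covH w)) (m.K w))
    (hIntFluct : ∀ w, Integrable
      (fun ω => anormSq (sketchCov (Matrix.of S) m.covH)
        (m.sgdIter S γ L ω L - m.gdIter S γ L ω L)) (m.K w))
    (hIntRisk : ∀ w, Integrable (fun ω => m.riskM S w (m.sgdIter S γ L ω L)) (m.K w))
    (hIntApprox : Integrable
      (fun w => anormSq m.covH ((Matrix.of S)ᵀ *ᵥ vstar (Matrix.of S) m.covH w - w)) m.μw)
    (hIntExc' : Integrable
      (fun w => ∫ ω, anormSq (sketchCov (Matrix.of S) m.covH)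
        (m.gdIter S γ L ω L - vstar (Matrix.of S) m.covH w) ∂(m.K w)) m.μw)
    (hIntFluct' : Integrable
      (fun w => ∫ ω, anormSq (sketchCov (Matrix.of S) m.covH)
        (m.sgdIter S γ L ω L - m.gdIter S γ L ω L) ∂(m.K w)) m.μw)
    (hIntRisk' : Integrable
      (fun w => ∫ ω, m.riskM S w (m.sgdIter S γ L ω L) ∂(m.K w)) m.μw) :
    m.sgdRisk S γ L =
      m.σ2 +
        (∫ w, anormSq m.covH ((Matrix.of S)ᵀ *ᵥ vstar (Matrix.of S) m.covH w - w) ∂m.μw) +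
        (∫ w, (∫ ω, anormSq (sketchCov (Matrix.of S) m.covH)
            (m.gdIter S γ L ω L - vstar (Matrix.of S) m.covH w) ∂(m.K w)) ∂m.μw) +
        m.fluctTerm S γ L :=
  statement_7_general d N M L Ω m S γ hwp hinv hIntExc hIntFluct hIntRisk hIntApprox hIntExc'
    hIntFluct'

end ScalingLaw
end
end

section
/- Let Σ̂ be a random M×M positive semi-definite matrix and γ_0 a (possibly random, Σ̂-measurable) stepsize with γ_0 ‖Σ̂‖ ≤ 1/4 almost surely, and let γ_t = γ_0/2^{⌊t/(L/log L)⌋} for t = 1, …, L with L̃ := ⌊L/log L⌋. Then the matrix E[∏_{t=1}^L (I − γ_t Σ̂)] satisfies μ_{M−i+1}(E[∏_{t=1}^L (I − γ_t Σ̂)]) ≥ 1/(2e) for every i ≥ 2k̄ + 1, where k̄ := E[#{i ∈ [M] : λ̂_i L̃ γ_0 > 1/4}] and λ̂_1 ≥ ⋯ ≥ λ̂_M are the eigenvalues of Σ̂, and μ_j(A) denotes the j-th largest eigenvalue of A. -/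
open MeasureTheory ProbabilityTheory Matrix Finset
open scoped NNReal ENNReal

noncomputable section

/-!
Diagonalise `Σ̂ = U diag(λ) Uᵀ` (columns `u_l`), so that `∏ₜ (I - γₜ Σ̂) = U diag(μ) Uᵀ` with
`μₗ = ∏ₜ (1 - γₜ λₗ) ∈ [0, 1]`. Since `γ₀ λₗ ≤ 1/4` and `∑ₜ γₜ ≤ 2 L̃ γ₀`, every eigenvalue
with `L̃ γ₀ λₗ ≤ 1/4` has `μₗ ≥ 1 - ∑ₜ γₜ λₗ ≥ 1/2 ≥ e⁻¹`, and only `k(Σ̂)` eigenvalues are not of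
this kind.

Let `v_j` be orthonormal eigenvectors of the mean `Ā = E[∏ₜ (I - γₜ Σ̂)]` and `T` the set of the
`r` indices whose eigenvalue `ν_j` is below `1/(2e)`. The weights `c_l = ∑_{j ∈ T} ⟨u_l, v_j⟩²`
lie in `[0, 1]` and sum to `r`, so `∑_{j ∈ T} v_jᵀ (U diag(μ) Uᵀ) v_j = ∑ₗ μₗ cₗ ≥ e⁻¹ (r - k(Σ̂))`.
Taking expectations, `r / (2e) ≥ ∑_{j ∈ T} ν_j ≥ e⁻¹ (r - k̄)`, i.e. `r ≤ 2 k̄ < i`: fewer than `i`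
eigenvalues of `Ā` lie below `1/(2e)`.
-/

open Polynomial Unitary Filter Topology

theorem one_sub_sum_le_prod_one_sub {ι : Type*} [LinearOrder ι] (s : Finset ι) {x : ι → ℝ}
    (h0 : ∀ i ∈ s, 0 ≤ x i) (h1 : ∀ i ∈ s, x i ≤ 1) :
    1 - ∑ i ∈ s, x i ≤ ∏ i ∈ s, (1 - x i) := by
  rw [prod_one_sub_ordered]
  gcongr with i hi
  refine mul_le_of_le_one_right (h0 i hi) (prod_le_one (fun j hj => ?_) fun j hj => ?_)
  · linarith [h1 j (mem_filter.1 hj).1]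
  · linarith [h0 j (mem_filter.1 hj).1]

theorem sum_range_inv_two_pow_div_le {m : ℕ} (hm : 0 < m) (L : ℕ) :
    ∑ t ∈ range L, (2⁻¹ : ℝ) ^ (t / m) ≤ 2 * m := by
  induction L using Nat.strong_induction_on with
  | _ L ih =>
    rcases le_or_gt L m with hL | hL
    · calc ∑ t ∈ range L, (2⁻¹ : ℝ) ^ (t / m) ≤ ∑ _t ∈ range L, 1 :=
            sum_le_sum fun t _ => pow_le_one₀ (by norm_num) (by norm_num)
        _ ≤ 2 * m := by
          rw [sum_const, card_range, nsmul_one]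
          exact_mod_cast (by omega : L ≤ 2 * m)
    · obtain ⟨L, rfl⟩ : ∃ L', L = m + L' := ⟨L - m, by omega⟩
      have hfirst : ∑ t ∈ range m, (2⁻¹ : ℝ) ^ (t / m) = m := by
        rw [sum_congr rfl fun t ht => by rw [Nat.div_eq_of_lt (mem_range.1 ht)]]
        simp
      have hrest : ∑ t ∈ range L, (2⁻¹ : ℝ) ^ ((m + t) / m)
          = 2⁻¹ * ∑ t ∈ range L, (2⁻¹ : ℝ) ^ (t / m) := by
        rw [mul_sum]
        refine sum_congr rfl fun t _ => ?_
        rw [Nat.add_div_left _ hm, pow_succ']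
      rw [sum_range_add, hfirst, hrest]
      linarith [ih L (by omega)]

theorem card_filter_eq_countP_ofFn {α : Type*} {n : ℕ} (f : Fin n → α) (p : α → Prop)
    [DecidablePred p] : #{i | p (f i)} = (List.ofFn f).countP p := by
  rw [← Multiset.coe_countP, ← Fin.univ_val_map, Multiset.countP_map]
  rfl

theorem exists_polynomial_tendsto_ite (a : ℝ) :
    ∃ p : ℕ → ℝ[X], ∀ x, Tendsto (fun n => (p n).eval x) atTop (𝓝 (if a < x then 1 else 0)) := by
  set φ : ℕ → ℝ → ℝ := fun n x => min 1 (n * max 0 (x - a))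
  have hφ : ∀ n, Continuous (φ n) := fun n => by fun_prop
  -- Weierstrass on `[-n, n]` with accuracy `1 / (n + 1)`: every `x` is eventually covered
  choose p hp using fun n : ℕ => exists_polynomial_near_of_continuousOn (-n) n (φ n)
    (hφ n).continuousOn (1 / (n + 1)) (by positivity)
  refine ⟨p, fun x => ?_⟩
  have hlim : Tendsto (fun n => φ n x) atTop (𝓝 (if a < x then 1 else 0)) := by
    split_ifs with hx
    · refine tendsto_const_nhds.congr' ?_
      filter_upwards [(tendsto_natCast_atTop_atTop.atTop_mul_const
        (sub_pos.2 hx)).eventually_ge_atTop 1] with n hn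
      simp only [φ, max_eq_right (sub_pos.2 hx).le, min_eq_left hn]
    · refine tendsto_const_nhds.congr fun n => ?_
      simp only [φ, max_eq_left (sub_nonpos.2 (not_lt.1 hx)), mul_zero, min_eq_right zero_le_one]
  have hnear : Tendsto (fun n => (p n).eval x - φ n x) atTop (𝓝 0) := by
    refine squeeze_zero_norm' ?_ tendsto_one_div_add_atTop_nhds_zero_nat
    filter_upwards [tendsto_natCast_atTop_atTop.eventually_ge_atTop |x|] with n hn
    exact (hp n x ⟨by linarith [neg_abs_le x], (le_abs_self x).trans hn⟩).le
  simpa using hnear.add hlim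

namespace Matrix

variable {n : Type*} [Fintype n] [DecidableEq n]

theorem aeval_diagonal {R : Type*} [CommRing R] (d : n → R) (p : R[X]) :
    aeval (diagonal d) p = diagonal fun l => p.eval (d l) := by
  rw [← diagonalAlgHom_apply R, aeval_algHom_apply, aeval_pi]
  rfl

theorem aeval_conjStarAlgAut_diagonal {R : Type*} [CommRing R] [StarRing R]
    (U : unitaryGroup n R) (d : n → R) (p : R[X]) :
    aeval (conjStarAlgAut R _ U (diagonal d)) p =
      conjStarAlgAut R _ U (diagonal fun l => p.eval (d l)) := by
  rw [aeval_algHom_apply, aeval_diagonal]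

theorem trace_conjStarAlgAut {R : Type*} [CommRing R] [StarRing R] (U : unitaryGroup n R)
    (B : Matrix n n R) : trace (conjStarAlgAut R _ U B) = trace B := by
  rw [conjStarAlgAut_apply, trace_mul_cycle, coe_star_mul_self, one_mul]

theorem IsHermitian.aeval_eq {A : Matrix n n ℝ} (hA : A.IsHermitian) (p : ℝ[X]) :
    aeval A p = conjStarAlgAut ℝ _ hA.eigenvectorUnitary
      (diagonal fun l => p.eval (hA.eigenvalues l)) := by
  conv_lhs => rw [hA.spectral_theorem, RCLike.ofReal_real_eq_id, Function.id_comp]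
  exact aeval_conjStarAlgAut_diagonal _ _ p

theorem IsHermitian.trace_aeval {A : Matrix n n ℝ} (hA : A.IsHermitian) (p : ℝ[X]) :
    trace (aeval A p) = ∑ l, p.eval (hA.eigenvalues l) := by
  rw [hA.aeval_eq, trace_conjStarAlgAut, trace_diagonal]

theorem IsHermitian.eigenvalues_eq_star_mul_mul_apply {A : Matrix n n ℝ} (hA : A.IsHermitian)
    (j : n) : hA.eigenvalues j =
      (star (hA.eigenvectorUnitary : Matrix n n ℝ) * A * hA.eigenvectorUnitary) j j := by
  have h := hA.conjStarAlgAut_star_eigenvectorUnitary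
  rw [conjStarAlgAut_apply, coe_star, star_star, RCLike.ofReal_real_eq_id, Function.id_comp] at h
  simp [h]

theorem sum_sq_row_eq_one (U : unitaryGroup n ℝ) (a : n) :
    ∑ l, (U : Matrix n n ℝ) a l ^ 2 = 1 := by
  simpa [Matrix.mul_apply, sq] using congr_fun₂ (coe_mul_star_self U) a a

theorem sum_sq_col_eq_one (U : unitaryGroup n ℝ) (l : n) :
    ∑ a, (U : Matrix n n ℝ) a l ^ 2 = 1 := by
  simpa [Matrix.mul_apply, sq] using congr_fun₂ (coe_star_mul_self U) l l

theorem abs_conjStarAlgAut_diagonal_apply_le (U : unitaryGroup n ℝ) {d : n → ℝ}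
    (hd : ∀ l, |d l| ≤ 1) (a b : n) : |conjStarAlgAut ℝ _ U (diagonal d) a b| ≤ 1 := by
  set u : Matrix n n ℝ := (U : Matrix n n ℝ)
  rw [conjStarAlgAut_apply, Matrix.mul_apply]
  calc |∑ l, (u * diagonal d) a l * star u l b| ≤ ∑ l, |u a l| * |u b l| := by
        refine (abs_sum_le_sum_abs _ _).trans (sum_le_sum fun l _ => ?_)
        rw [mul_diagonal, star_apply, star_trivial, abs_mul, abs_mul]
        exact mul_le_mul_of_nonneg_right (mul_le_of_le_one_right (abs_nonneg _) (hd l))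
          (abs_nonneg _)
    _ ≤ ∑ l, (u a l ^ 2 + u b l ^ 2) / 2 := sum_le_sum fun l _ => by
        have := two_mul_le_add_sq |u a l| |u b l|
        rw [sq_abs, sq_abs] at this
        linarith
    _ = 1 := by rw [← sum_div, sum_add_distrib, sum_sq_row_eq_one, sum_sq_row_eq_one]; norm_num

theorem mul_card_sub_card_le_sum_diag (W : unitaryGroup n ℝ) {μ : n → ℝ} (hμ : 0 ≤ μ)
    {θ : ℝ} (hθ : 0 ≤ θ) (T : Finset n) :
    θ * (#T - #{l | μ l < θ}) ≤ ∑ j ∈ T, (star (W : Matrix n n ℝ) * diagonal μ * W) j j := by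
  set w : Matrix n n ℝ := (W : Matrix n n ℝ)
  set c : n → ℝ := fun l => ∑ j ∈ T, w l j ^ 2
  have hc0 : ∀ l, 0 ≤ c l := fun l => sum_nonneg fun j _ => sq_nonneg _
  have hc1 : ∀ l, c l ≤ 1 := fun l => sum_sq_row_eq_one W l ▸
    sum_le_sum_of_subset_of_nonneg (subset_univ T) fun j _ _ => sq_nonneg _
  have hcsum : ∑ l, c l = #T := by
    rw [sum_comm, sum_congr rfl fun j _ => sum_sq_col_eq_one W j, sum_const, nsmul_one]
  have hdiag : ∑ j ∈ T, (star w * diagonal μ * w) j j = ∑ l, μ l * c l := by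
    have hentry : ∀ j, (star w * diagonal μ * w) j j = ∑ l, μ l * w l j ^ 2 := fun j => by
      rw [Matrix.mul_apply]
      exact sum_congr rfl fun l _ => by rw [mul_diagonal, star_apply, star_trivial]; ring
    simp only [hentry, c, mul_sum]
    exact sum_comm
  have hterm : ∀ l, θ * (c l - if μ l < θ then 1 else 0) ≤ μ l * c l := fun l => by
    split_ifs with h
    · nlinarith [mul_nonneg (hμ l) (hc0 l), mul_nonneg hθ (sub_nonneg.2 (hc1 l))]
    · nlinarith [mul_le_mul_of_nonneg_right (not_lt.1 h) (hc0 l)]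
  calc θ * (#T - #{l | μ l < θ}) = ∑ l, θ * (c l - if μ l < θ then 1 else 0) := by
        rw [← mul_sum, sum_sub_distrib, hcsum, card_filter]; push_cast; rfl
    _ ≤ _ := hdiag ▸ sum_le_sum fun l _ => hterm l

end Matrix

namespace ScalingLaw

theorem one_le_effSteps {L : ℕ} (hL : 2 ≤ L) : 1 ≤ effSteps L :=
  Nat.div_pos (Nat.log_le_self 2 L) (Nat.log_pos one_lt_two hL)

theorem stepSize_nonneg {γ0 : ℝ} (hγ0 : 0 ≤ γ0) (L t : ℕ) : 0 ≤ stepSize γ0 L t := by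
  unfold stepSize; positivity

theorem stepSize_le {γ0 : ℝ} (hγ0 : 0 ≤ γ0) (L t : ℕ) : stepSize γ0 L t ≤ γ0 :=
  div_le_self hγ0 (one_le_pow₀ one_le_two)

theorem sum_stepSize_le {γ0 : ℝ} (hγ0 : 0 ≤ γ0) {L : ℕ} (hL : 2 ≤ L) :
    ∑ t ∈ range L, stepSize γ0 L (t + 1) ≤ 2 * effSteps L * γ0 := by
  calc ∑ t ∈ range L, stepSize γ0 L (t + 1)
      ≤ ∑ t ∈ range L, γ0 * (2⁻¹ : ℝ) ^ (t / effSteps L) := by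
        refine sum_le_sum fun t _ => ?_
        rw [show stepSize γ0 L (t + 1) = γ0 * (2⁻¹ : ℝ) ^ ((t + 1) / effSteps L) by
          rw [stepSize, effSteps, div_eq_mul_inv, inv_pow]]
        exact mul_le_mul_of_nonneg_left (pow_le_pow_of_le_one (by norm_num) (by norm_num)
          (Nat.div_le_div_right t.le_succ)) hγ0
    _ ≤ γ0 * (2 * effSteps L) := by
        rw [← mul_sum]
        exact mul_le_mul_of_nonneg_left
          (sum_range_inv_two_pow_div_le (one_le_effSteps hL) L) hγ0
    _ = 2 * effSteps L * γ0 := by ring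

theorem prod_one_sub_stepSize_mul_mem_Icc {γ0 x : ℝ} (hγ0 : 0 ≤ γ0) (hx : 0 ≤ x)
    (hγ0x : γ0 * x ≤ 1) (L k : ℕ) :
    ∏ t ∈ range k, (1 - stepSize γ0 L (t + 1) * x) ∈ Set.Icc 0 1 := by
  have hstep : ∀ t, 0 ≤ stepSize γ0 L t * x ∧ stepSize γ0 L t * x ≤ 1 := fun t =>
    ⟨mul_nonneg (stepSize_nonneg hγ0 L t) hx,
      (mul_le_mul_of_nonneg_right (stepSize_le hγ0 L t) hx).trans hγ0x⟩
  exact ⟨prod_nonneg fun t _ => by linarith [hstep (t + 1)],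
    prod_le_one (fun t _ => by linarith [hstep (t + 1)]) fun t _ => by linarith [hstep (t + 1)]⟩

theorem half_le_prod_one_sub_stepSize_mul {γ0 x : ℝ} (hγ0 : 0 ≤ γ0) (hx : 0 ≤ x)
    (hγ0x : γ0 * x ≤ 1 / 4) (L : ℕ) (hLx : effSteps L * (γ0 * x) ≤ 1 / 4) :
    1 / 2 ≤ ∏ t ∈ range L, (1 - stepSize γ0 L (t + 1) * x) := by
  have hstep : ∀ t, stepSize γ0 L t * x ≤ γ0 * x := fun t =>
    mul_le_mul_of_nonneg_right (stepSize_le hγ0 L t) hx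
  have hsum : ∑ t ∈ range L, stepSize γ0 L (t + 1) * x ≤ 1 / 2 := by
    rcases lt_or_ge L 2 with hL | hL
    -- here `Nat.log 2 L = 0`, so the schedule is constant and `L̃ = 0` carries no information
    · interval_cases L
      · simp
      · simpa using (hstep 1).trans (by linarith)
    · rw [← sum_mul]
      nlinarith [sum_stepSize_le hγ0 hL]
  refine le_trans ?_ (one_sub_sum_le_prod_one_sub _ (fun t _ => ?_) fun t _ => ?_)
  · linarith
  · exact mul_nonneg (stepSize_nonneg hγ0 L _) hx
  · linarith [hstep (t + 1)]

section Eigval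

variable {n : ℕ} {A : Matrix (Fin n) (Fin n) ℝ}

theorem eigval_succ (hA : A.IsHermitian) (k : ℕ) :
    eigval A (k + 1) = ((List.ofFn hA.eigenvalues).insertionSort (· ≥ ·)).getD k 0 := by
  rw [eigval, dif_pos hA, Nat.add_sub_cancel]

theorem card_filter_eigval (hA : A.IsHermitian) (p : ℝ → Prop) [DecidablePred p] :
    #{i : Fin n | p (eigval A (i + 1))} = #{l | p (hA.eigenvalues l)} := by
  have hsorted : List.ofFn (fun i : Fin n => eigval A (i + 1)) =
      (List.ofFn hA.eigenvalues).insertionSort (· ≥ ·) := by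
    refine List.ext_getElem (by simp) fun k hk _ => ?_
    rw [List.getElem_ofFn, eigval_succ hA, List.getD_eq_getElem]
  rw [card_filter_eq_countP_ofFn, card_filter_eq_countP_ofFn, hsorted,
    (List.perm_insertionSort _ _).countP_eq]

/-- `eigval A (n - i + 1)` is the `i`-th smallest eigenvalue. -/
theorem le_eigval_of_card_lt (hA : A.IsHermitian) {τ : ℝ} {i : ℕ} (hi : i ≤ n)
    (hcard : #{l | hA.eigenvalues l < τ} < i) : τ ≤ eigval A (n - i + 1) := by
  set sorted := (List.ofFn hA.eigenvalues).insertionSort (· ≥ ·)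
  have hk : n - i < sorted.length := by simp [sorted]; omega
  by_contra! hlt
  rw [eigval_succ hA, List.getD_eq_getElem _ _ hk] at hlt
  have htail : ∀ x ∈ sorted.drop (n - i), x < τ := by
    have hpw := (List.pairwise_insertionSort (· ≥ ·) _).sublist (List.drop_sublist (n - i) sorted)
    rw [List.drop_eq_getElem_cons hk, List.pairwise_cons] at hpw
    rw [List.drop_eq_getElem_cons hk]
    rintro x (_ | ⟨_, hx⟩)
    · exact hlt
    · exact (hpw.1 x hx).trans_lt hlt
  have : i ≤ sorted.countP (· < τ) := by
    calc i = (sorted.drop (n - i)).length := by simp [sorted]; omega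
      _ = (sorted.drop (n - i)).countP (· < τ) :=
          (List.countP_eq_length.2 (by simpa using htail)).symm
      _ ≤ sorted.countP (· < τ) := (List.drop_sublist _ _).countP_le
  rw [(List.perm_insertionSort _ _).countP_eq, ← card_filter_eq_countP_ofFn] at this
  omega

end Eigval

section Contraction

variable {M : ℕ}

theorem abs_eigenvalues_le_opNorm {A : Matrix (Fin M) (Fin M) ℝ} (hA : A.IsHermitian)
    (l : Fin M) : |hA.eigenvalues l| ≤ opNorm A := by
  set v := hA.eigenvectorBasis l
  have hv : toEuclideanCLM (𝕜 := ℝ) A v = hA.eigenvalues l • v := by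
    ext i
    simpa using congr_fun (hA.mulVec_eigenvectorBasis l) i
  have := (toEuclideanCLM (𝕜 := ℝ) A).le_opNorm v
  rwa [hv, norm_smul, hA.eigenvectorBasis.orthonormal.1 l, mul_one, mul_one] at this

theorem mul_eigenvalues_le {A : Matrix (Fin M) (Fin M) ℝ} (hA : A.IsHermitian) {γ0 c : ℝ}
    (hγ0 : 0 ≤ γ0) (hop : γ0 * opNorm A ≤ c) (l : Fin M) : γ0 * hA.eigenvalues l ≤ c :=
  (mul_le_mul_of_nonneg_left ((le_abs_self _).trans (abs_eigenvalues_le_opNorm hA l)) hγ0).trans hop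

theorem contraction_eq_aeval (A : Matrix (Fin M) (Fin M) ℝ) (γs : ℕ → ℝ) (k : ℕ) :
    contraction A γs k = aeval A (∏ t ∈ range k, (1 - C (γs (t + 1)) * X)) := by
  induction k with
  | zero => simp [contraction]
  | succ k ih =>
    rw [contraction, ih, prod_range_succ, mul_comm, map_mul]
    simp [Algebra.smul_def]

theorem contraction_eq_conj {A : Matrix (Fin M) (Fin M) ℝ} (hA : A.IsHermitian) (γs : ℕ → ℝ)
    (k : ℕ) : contraction A γs k = conjStarAlgAut ℝ _ hA.eigenvectorUnitary
      (diagonal fun l => ∏ t ∈ range k, (1 - γs (t + 1) * hA.eigenvalues l)) := by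
  rw [contraction_eq_aeval, hA.aeval_eq]
  simp [eval_prod]

theorem isHermitian_contraction {A : Matrix (Fin M) (Fin M) ℝ} (hA : A.IsHermitian)
    (γs : ℕ → ℝ) (k : ℕ) : (contraction A γs k).IsHermitian := by
  rw [contraction_eq_conj hA]
  exact IsSelfAdjoint.map (f := conjStarAlgAut ℝ _ hA.eigenvectorUnitary)
    (by exact isHermitian_diagonal _)

theorem measurable_contraction_apply {Ω : Type*} [MeasurableSpace Ω]
    {Sig : Ω → Matrix (Fin M) (Fin M) ℝ} {γs : Ω → ℕ → ℝ}
    (hSig : ∀ a b, Measurable fun ω => Sig ω a b) (hγs : ∀ t, Measurable fun ω => γs ω t)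
    (k : ℕ) (a b : Fin M) : Measurable fun ω => contraction (Sig ω) (γs ω) k a b := by
  induction k generalizing a b with
  | zero => exact measurable_const
  | succ k ih =>
    simp only [contraction, Matrix.mul_apply, Matrix.sub_apply, Matrix.smul_apply,
      Matrix.one_apply, smul_eq_mul]
    exact Finset.measurable_sum _ fun c _ =>
      (measurable_const.sub ((hγs (k + 1)).mul (hSig a c))).mul (ih c b)

variable {A : Matrix (Fin M) (Fin M) ℝ} {γ0 : ℝ} {L : ℕ}

theorem abs_contraction_apply_le (hA : A.PosSemidef) (hγ0 : 0 ≤ γ0)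
    (hop : γ0 * opNorm A ≤ 1 / 4) (a b : Fin M) :
    |contraction A (stepSize γ0 L) L a b| ≤ 1 := by
  rw [contraction_eq_conj hA.1]
  refine abs_conjStarAlgAut_diagonal_apply_le _ (fun l => ?_) a b
  obtain ⟨h0, h1⟩ := prod_one_sub_stepSize_mul_mem_Icc hγ0 (hA.eigenvalues_nonneg l)
    ((mul_eigenvalues_le hA.1 hγ0 hop l).trans (by norm_num)) L L
  exact abs_le.2 ⟨by linarith, h1⟩

theorem exp_neg_one_mul_card_sub_countAbove_le (hA : A.PosSemidef) (hγ0 : 0 ≤ γ0)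
    (hop : γ0 * opNorm A ≤ 1 / 4) (V : unitaryGroup (Fin M) ℝ) (T : Finset (Fin M)) :
    Real.exp (-1) * (#T - countAbove A (effSteps L * γ0) (1 / 4)) ≤
      ∑ j ∈ T, (star (V : Matrix (Fin M) (Fin M) ℝ) * contraction A (stepSize γ0 L) L * V) j j := by
  set U := hA.1.eigenvectorUnitary
  set μ : Fin M → ℝ := fun l => ∏ t ∈ range L, (1 - stepSize γ0 L (t + 1) * hA.1.eigenvalues l)
  have hconj : star (V : Matrix (Fin M) (Fin M) ℝ) * contraction A (stepSize γ0 L) L * V =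
      star ((star U * V : unitaryGroup (Fin M) ℝ) : Matrix (Fin M) (Fin M) ℝ) * diagonal μ *
        (star U * V : unitaryGroup (Fin M) ℝ) := by
    simp [contraction_eq_conj hA.1, conjStarAlgAut_apply, U, μ, Matrix.mul_assoc]
  have hcount : #{l | μ l < Real.exp (-1)} ≤ countAbove A (effSteps L * γ0) (1 / 4) := by
    rw [countAbove, card_filter_eigval hA.1 (fun x => 1 / 4 < effSteps L * γ0 * x)]
    refine card_le_card fun l => ?_
    simp only [mem_filter, mem_univ, true_and]
    contrapose!
    intro hl
    exact Real.exp_neg_one_lt_half.le.trans (half_le_prod_one_sub_stepSize_mul hγ0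
      (hA.eigenvalues_nonneg l) (mul_eigenvalues_le hA.1 hγ0 hop l) L (by rwa [← mul_assoc]))
  rw [hconj]
  refine le_trans ?_
    (mul_card_sub_card_le_sum_diag _ (θ := Real.exp (-1)) (fun l => ?_) (Real.exp_pos _).le T)
  · gcongr
  · exact (prod_one_sub_stepSize_mul_mem_Icc hγ0 (hA.eigenvalues_nonneg l)
      ((mul_eigenvalues_le hA.1 hγ0 hop l).trans (by norm_num)) L L).1

end Contraction

section Expectation

variable {Ω : Type*} [MeasurableSpace Ω] {P : Measure Ω} {k l m : ℕ}

theorem isHermitian_expMat {F : Ω → Matrix (Fin k) (Fin k) ℝ}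
    (hF : ∀ᵐ ω ∂P, (F ω).IsHermitian) : (expMat P F).IsHermitian := by
  ext a b
  exact integral_congr_ae (hF.mono fun ω hω => by simpa using hω.apply a b)

theorem integrable_mul_mul_apply {F : Ω → Matrix (Fin k) (Fin l) ℝ}
    (hF : ∀ a b, Integrable (fun ω => F ω a b) P) (B : Matrix (Fin m) (Fin k) ℝ)
    (C : Matrix (Fin l) (Fin m) ℝ) (a b : Fin m) :
    Integrable (fun ω => (B * F ω * C) a b) P := by
  simp only [Matrix.mul_apply, sum_mul]
  exact integrable_finsetSum _ fun d _ => integrable_finsetSum _ fun c _ =>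
    ((hF c d).const_mul _).mul_const _

theorem mul_expMat_mul {F : Ω → Matrix (Fin k) (Fin l) ℝ}
    (hF : ∀ a b, Integrable (fun ω => F ω a b) P) (B : Matrix (Fin m) (Fin k) ℝ)
    (C : Matrix (Fin l) (Fin m) ℝ) : B * expMat P F * C = expMat P fun ω => B * F ω * C := by
  ext a b
  simp only [expMat, of_apply, Matrix.mul_apply, sum_mul]
  rw [integral_finsetSum _ fun d _ => integrable_finsetSum _ fun c _ =>
    ((hF c d).const_mul _).mul_const _]
  refine sum_congr rfl fun d _ => ?_
  rw [integral_finsetSum _ fun c _ => ((hF c d).const_mul _).mul_const _]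
  exact sum_congr rfl fun c _ => by rw [integral_mul_const, integral_const_mul]

theorem aemeasurable_countAbove {M : ℕ} {Sig : Ω → Matrix (Fin M) (Fin M) ℝ} {s : Ω → ℝ}
    (hSig : Measurable fun ω => (fun i j => Sig ω i j : Fin M → Fin M → ℝ)) (hs : Measurable s)
    (thr : ℝ) (hherm : ∀ᵐ ω ∂P, (Sig ω).IsHermitian) :
    AEMeasurable (fun ω => (countAbove (Sig ω) (s ω) thr : ℝ)) P := by
  -- the count is the limit of the spectral sums `∑ₗ pₙ(s λₗ) = trace pₙ(s Σ̂)`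
  obtain ⟨p, hp⟩ := exists_polynomial_tendsto_ite thr
  refine aemeasurable_of_tendsto_metrizable_ae atTop
    (f := fun n ω => trace (aeval (s ω • Sig ω) (p n))) (fun n => ?_) ?_
  · have hcont : Continuous fun B : Fin M → Fin M → ℝ => trace (aeval (Matrix.of B) (p n)) :=
      ((Polynomial.continuous_aeval (p n)).comp continuous_id).matrix_trace
    exact (hcont.measurable.comp (hs.smul hSig)).aemeasurable
  filter_upwards [hherm] with ω hA
  have htrace : ∀ n, trace (aeval (s ω • Sig ω) (p n)) =
      ∑ l, (p n).eval (s ω * hA.eigenvalues l) := fun n => by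
    rw [show s ω • Sig ω = aeval (Sig ω) (C (s ω) * X) by simp [Algebra.smul_def], ← aeval_comp,
      hA.trace_aeval]
    simp
  simp_rw [htrace, countAbove, card_filter_eigval hA (fun x => thr < s ω * x), card_filter]
  push_cast
  exact tendsto_finsetSum _ fun l _ => hp _

theorem integrable_countAbove [IsFiniteMeasure P] {M : ℕ} {Sig : Ω → Matrix (Fin M) (Fin M) ℝ}
    {s : Ω → ℝ} (hSig : Measurable fun ω => (fun i j => Sig ω i j : Fin M → Fin M → ℝ))
    (hs : Measurable s) (thr : ℝ) (hherm : ∀ᵐ ω ∂P, (Sig ω).IsHermitian) :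
    Integrable (fun ω => (countAbove (Sig ω) (s ω) thr : ℝ)) P :=
  Integrable.of_bound (aemeasurable_countAbove hSig hs thr hherm).aestronglyMeasurable M
    (ae_of_all _ fun ω => by
      rw [Real.norm_natCast]
      exact_mod_cast (card_le_univ _).trans_eq (Fintype.card_fin M))

variable {M L : ℕ} {Sig : Ω → Matrix (Fin M) (Fin M) ℝ} {g0 : Ω → ℝ}

theorem integrable_contraction_apply [IsFiniteMeasure P]
    (hSig : Measurable fun ω => (fun i j => Sig ω i j : Fin M → Fin M → ℝ)) (hg0 : Measurable g0)
    (hae : ∀ᵐ ω ∂P, (Sig ω).PosSemidef ∧ 0 ≤ g0 ω ∧ g0 ω * opNorm (Sig ω) ≤ 1 / 4)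
    (a b : Fin M) : Integrable (fun ω => contraction (Sig ω) (stepSize (g0 ω) L) L a b) P :=
  Integrable.of_bound (measurable_contraction_apply
      (fun a b => (measurable_pi_apply b).comp ((measurable_pi_apply a).comp hSig))
      (fun _ => hg0.div_const _) L a b).aestronglyMeasurable 1
    (hae.mono fun _ h => abs_contraction_apply_le h.1 h.2.1 h.2.2 a b)

theorem exp_neg_one_mul_card_sub_integral_countAbove_le [IsProbabilityMeasure P]
    (hSig : Measurable fun ω => (fun i j => Sig ω i j : Fin M → Fin M → ℝ)) (hg0 : Measurable g0)
    (hae : ∀ᵐ ω ∂P, (Sig ω).PosSemidef ∧ 0 ≤ g0 ω ∧ g0 ω * opNorm (Sig ω) ≤ 1 / 4)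
    (V : unitaryGroup (Fin M) ℝ) (T : Finset (Fin M)) :
    Real.exp (-1) * (#T - ∫ ω, (countAbove (Sig ω) (effSteps L * g0 ω) (1 / 4) : ℝ) ∂P) ≤
      ∑ j ∈ T, (star (V : Matrix (Fin M) (Fin M) ℝ) *
        expMat P (fun ω => contraction (Sig ω) (stepSize (g0 ω) L) L) * V) j j := by
  have hcount := integrable_countAbove hSig (hg0.const_mul (effSteps L)) (1 / 4)
    (hae.mono fun _ h => h.1.1)
  have hF := integrable_contraction_apply (L := L) hSig hg0 hae
  have hdiag := integrable_mul_mul_apply hF (star (V : Matrix (Fin M) (Fin M) ℝ)) V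
  calc Real.exp (-1) * (#T - ∫ ω, (countAbove (Sig ω) (effSteps L * g0 ω) (1 / 4) : ℝ) ∂P)
      = ∫ ω, Real.exp (-1) * (#T - countAbove (Sig ω) (effSteps L * g0 ω) (1 / 4)) ∂P := by
        rw [integral_const_mul, integral_sub (integrable_const _) hcount]
        simp
    _ ≤ ∫ ω, ∑ j ∈ T, (star (V : Matrix (Fin M) (Fin M) ℝ) *
          contraction (Sig ω) (stepSize (g0 ω) L) L * V) j j ∂P :=
        integral_mono_ae (((integrable_const _).sub hcount).const_mul _)
          (integrable_finsetSum _ fun j _ => hdiag j j)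
          (hae.mono fun _ h => exp_neg_one_mul_card_sub_countAbove_le h.1 h.2.1 h.2.2 V T)
    _ = _ := by
        rw [integral_finsetSum _ fun j _ => hdiag j j, mul_expMat_mul hF]
        rfl

end Expectation

/-- For a random PSD matrix `Σ̂` and a `Σ̂`-measurable stepsize `γ₀` with
`γ₀‖Σ̂‖ ≤ 1/4` a.s., the geometric-schedule contraction satisfies
`μ_{M-i+1}(E[∏ₜ (I - γₜ Σ̂)]) ≥ 1/(2e)` for every `i ≥ 2k̄ + 1` with `i ≤ M`, where
`k̄ = E[#{i : λ̂ᵢ L̃ γ₀ > 1/4}]`. -/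
theorem statement_11
    (M L : ℕ) (Ω : Type*) [MeasurableSpace Ω] (P : Measure Ω)
    (Sig : Ω → Matrix (Fin M) (Fin M) ℝ) (g0 : Ω → ℝ)
    (hP : IsProbabilityMeasure P)
    (hmeas : Measurable fun ω => (fun i j => Sig ω i j : Fin M → Fin M → ℝ))
    (hg0 : @Measurable Ω ℝ
      (MeasurableSpace.comap (fun ω => (fun i j => Sig ω i j : Fin M → Fin M → ℝ))
        inferInstance) _ g0)
    (hae : ∀ᵐ ω ∂P, (Sig ω).PosSemidef ∧ 0 ≤ g0 ω ∧ g0 ω * opNorm (Sig ω) ≤ 1 / 4) :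
    ∀ i : ℕ, i ≤ M →
      2 * (∫ ω, (countAbove (Sig ω) ((effSteps L : ℝ) * g0 ω) (1 / 4) : ℝ) ∂P) + 1 ≤ (i : ℝ) →
      1 / (2 * Real.exp 1) ≤
        eigval (expMat P fun ω => contraction (Sig ω) (stepSize (g0 ω) L) L) (M - i + 1) := by
  intro i hiM hi
  have hg0meas : Measurable g0 := hg0.mono hmeas.comap_le le_rfl
  have hAbar : (expMat P fun ω => contraction (Sig ω) (stepSize (g0 ω) L) L).IsHermitian :=
    isHermitian_expMat (hae.mono fun ω h => isHermitian_contraction h.1.1 _ _)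
  set T : Finset (Fin M) := {j | hAbar.eigenvalues j < 1 / (2 * Real.exp 1)}
  have hupper : ∑ j ∈ T, hAbar.eigenvalues j ≤ #T * (1 / (2 * Real.exp 1)) := by
    simpa using sum_le_card_nsmul T _ _ fun j hj => (mem_filter.1 hj).2.le
  have hlower := exp_neg_one_mul_card_sub_integral_countAbove_le (L := L) hmeas hg0meas hae
    hAbar.eigenvectorUnitary T
  simp_rw [← hAbar.eigenvalues_eq_star_mul_mul_apply] at hlower
  have hhalf : (#T : ℝ) - ∫ ω, (countAbove (Sig ω) (effSteps L * g0 ω) (1 / 4) : ℝ) ∂P ≤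
      #T / 2 := by
    refine le_of_mul_le_mul_left (hlower.trans (hupper.trans_eq ?_)) (Real.exp_pos (-1))
    rw [Real.exp_neg]
    ring
  have hT : #T < i := by exact_mod_cast (show (#T : ℝ) < i by linarith)
  exact le_eigval_of_card_lt hAbar hiM hT

end ScalingLaw
end
end
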